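/- Fix nonzero complex numbers z_1,…,z_k, set t_l = z_l·conj(z_l) and T = t_1/ζ_{c_1}+⋯+t_k/ζ_{c_k}, and define the operator L from functions on G≀S(n) to functions on G≀S(n+1) by (Lψ)(x) = ((n+1)/(n+T))^{1/2}·∏_{l=1}^k z_l^{[x]_{c_l}−[p_{n,n+1}(x)]_{c_l}}·ψ(p_{n,n+1}(x)). Then: (a) L is an isometric embedding of L²(G≀S(n), uniform probability measure) into L²(G≀S(n+1), uniform probability measure): for every ψ : G≀S(n) → ℂ, (1/(|G|^{n+1}(n+1)!))·Σ_{x∈G≀S(n+1)} |(Lψ)(x)|² = (1/(|G|^n·n!))·Σ_{y∈G≀S(n)} |ψ(y)|²; (b) L intertwines the two-sided regular representations of (G≀S(n)) × (G≀S(n)): for all w_1, w_2 ∈ G≀S(n), every ψ : G≀S(n) → ℂ, and every x ∈ G≀S(n+1), (Lψ)(ι(w_2)^{-1}·x·ι(w_1)) = (Lψ')(x), where ψ'(y) = ψ(w_2^{-1}·y·w_1) and ι is the embedding of G≀S(n) into G≀S(n+1). -/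

import Mathlib

namespace WreathPaper

/-- The permutation action of `S(n)` on `G^n`. -/
def permAut (G : Type*) [Group G] (n : ℕ) : Equiv.Perm (Fin n) →* MulAut (Fin n → G) where
  toFun s :=
    { toFun := fun g => g ∘ s.symm
      invFun := fun g => g ∘ s
      left_inv := fun g => funext fun i => by simp
      right_inv := fun g => funext fun i => by simp
      map_mul' := fun g h => rfl }
  map_one' := by ext g i; rfl
  map_mul' := fun s t => by ext g i; rfl

/-- The wreath product `G ≀ S(n)`: underlying set `G^n × S(n)` with
`((g₁,…,gₙ),s)·((h₁,…,hₙ),t) = ((g₁h_{s⁻¹(1)},…,g_nh_{s⁻¹(n)}), st)`. -/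
abbrev WP (G : Type*) [Group G] (n : ℕ) :=
  SemidirectProduct (Fin n → G) (Equiv.Perm (Fin n)) (permAut G n)

namespace WP

variable {G : Type*} [Group G] {n : ℕ}

def wpEquivProd (G : Type*) [Group G] (n : ℕ) :
    WP G n ≃ (Fin n → G) × Equiv.Perm (Fin n) where
  toFun x := (x.left, x.right)
  invFun p := ⟨p.1, p.2⟩
  left_inv x := rfl
  right_inv p := rfl

instance [Fintype G] : Fintype (WP G n) := Fintype.ofEquiv _ (wpEquivProd G n).symm
instance [DecidableEq G] : DecidableEq (WP G n) := (wpEquivProd G n).decidableEq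

/-- The cycle-product of `x = ((g₁,…,gₙ),s)` corresponding to the cycle of `s`
containing `i` (computed starting at `i`): `g_{s^{r-1}(i)} ⋯ g_{s(i)} g_i`. -/
noncomputable def cycleProd (x : WP G n) (i : Fin n) : G :=
  (((List.range (Function.minimalPeriod (⇑x.right) i)).reverse).map
    fun j => x.left ((x.right ^ j) i)).prod

/-- `[x]_c`: the number of cycles of `x` whose cycle-product lies in `c`
(cycles are counted via their minimal representative). -/
noncomputable def cycleCount (x : WP G n) (c : Set G) : ℕ :=
  Nat.card {i : Fin n // (∀ m : ℕ, i ≤ (x.right ^ m) i) ∧ cycleProd x i ∈ c}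

/-- The number of cycles of `x` of length `j` whose cycle-product lies in `c`. -/
noncomputable def cycleCountLen (x : WP G n) (c : Set G) (j : ℕ) : ℕ :=
  Nat.card {i : Fin n // (∀ m : ℕ, i ≤ (x.right ^ m) i) ∧
    Function.minimalPeriod (⇑x.right) i = j ∧ cycleProd x i ∈ c}

/-- Removing the point `n+1` from a permutation of `{1,…,n+1}`. -/
def projPerm (s : Equiv.Perm (Fin (n + 1))) : Equiv.Perm (Fin n) :=
  Equiv.removeNone (finSuccEquivLast.symm.trans (s.trans finSuccEquivLast))

/-- The canonical projection `p_{n,n+1} : G ≀ S(n+1) → G ≀ S(n)`. -/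
def proj (x : WP G (n + 1)) : WP G n :=
  ⟨fun i => if x.right (Fin.last n) = Fin.castSucc i
      then x.left (Fin.castSucc i) * x.left (Fin.last n)
      else x.left (Fin.castSucc i),
    projPerm x.right⟩

def castEquiv {m n : ℕ} (h : m ≤ n) : Fin m ≃ {i : Fin n // (i : ℕ) < m} where
  toFun i := ⟨⟨(i : ℕ), lt_of_lt_of_le i.isLt h⟩, i.isLt⟩
  invFun i := ⟨(i.1 : ℕ), i.2⟩
  left_inv i := rfl
  right_inv i := rfl

/-- The canonical embedding `ι_{m,n} : G ≀ S(m) → G ≀ S(n)` for `m ≤ n`. -/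
def emb {m n : ℕ} (h : m ≤ n) (x : WP G m) : WP G n :=
  ⟨fun i => if hi : (i : ℕ) < m then x.left ⟨(i : ℕ), hi⟩ else 1,
    x.right.extendDomain (castEquiv h)⟩

end WP

/-- `c` is a conjugacy class of `G`. -/
def IsConjClass {G : Type*} [Group G] (c : Set G) : Prop :=
  ∃ g : G, c = {h | IsConj g h}

end WreathPaper

namespace WreathPaper

/-- `T = t₁/ζ_{c₁} + ⋯ + t_k/ζ_{c_k}` where `ζ_{c_l} = |G|/|c_l|`. -/
noncomputable def ewensT {G : Type*} [Group G] [Fintype G] {k : ℕ}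
    (t : Fin k → ℝ) (c : Fin k → Set G) : ℝ :=
  ∑ l, t l * (Nat.card (c l) : ℝ) / (Fintype.card G : ℝ)

/-- The Ewens probability distribution on `G ≀ S(n)`:
`P(x) = t₁^{[x]_{c₁}} ⋯ t_k^{[x]_{c_k}} / (|G|ⁿ (T)ₙ)`. -/
noncomputable def ewensP {G : Type*} [Group G] [Fintype G] {k n : ℕ}
    (t : Fin k → ℝ) (c : Fin k → Set G) (x : WP G n) : ℝ :=
  (∏ l, t l ^ WP.cycleCount x (c l)) /
    ((Fintype.card G : ℝ) ^ n * (ascPochhammer ℝ n).eval (ewensT t c))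

end WreathPaper

namespace WreathPaper

/-- The operator `L : L²(G≀S(n)) → L²(G≀S(n+1))`,
`(Lψ)(x) = ((n+1)/(n+T))^{1/2} ∏_l z_l^{[x]_{c_l} − [p_{n,n+1}(x)]_{c_l}} ψ(p_{n,n+1}(x))`. -/
noncomputable def Lop {G : Type*} [Group G] [Fintype G] {k n : ℕ}
    (z : Fin k → ℂ) (c : Fin k → Set G) (ψ : WP G n → ℂ) (x : WP G (n + 1)) : ℂ :=
  (Real.sqrt (((n : ℝ) + 1) /
      ((n : ℝ) + ewensT (fun l => Complex.normSq (z l)) c)) : ℂ) *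
    (∏ l, z l ^ ((WP.cycleCount x (c l) : ℤ) - (WP.cycleCount (WP.proj x) (c l) : ℤ))) *
    ψ (WP.proj x)

/-! ### Auxiliary lemmas -/

namespace WP

open Equiv Function

variable {G : Type*} [Group G] {n : ℕ}

lemma mul_left_apply (x y : WP G n) (i : Fin n) :
    (x * y).left i = x.left i * y.left (x.right⁻¹ i) := rfl

lemma mul_right_apply (x y : WP G n) : (x * y).right = x.right * y.right := rfl

lemma inv_left_apply (x : WP G n) (i : Fin n) :
    (x⁻¹).left i = (x.left (x.right i))⁻¹ := rfl

/-! #### `projPerm` characterization -/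

lemma projPerm_castSucc_of_ne (s : Equiv.Perm (Fin (n + 1))) (i : Fin n)
    (h : s i.castSucc ≠ Fin.last n) :
    (projPerm s i).castSucc = s i.castSucc := by
  obtain ⟨j, hj⟩ := Fin.exists_castSucc_eq.mpr h
  have h2 : (finSuccEquivLast.symm.trans (s.trans finSuccEquivLast)) (some i) = some j := by
    simp [Equiv.trans_apply, ← hj]
  have h3 := Equiv.removeNone_some _ ⟨j, h2⟩
  rw [h2] at h3
  have : projPerm s i = j := Option.some_injective _ h3
  rw [this, hj]

lemma projPerm_castSucc_of_eq (s : Equiv.Perm (Fin (n + 1))) (i : Fin n)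
    (h : s i.castSucc = Fin.last n) :
    (projPerm s i).castSucc = s (Fin.last n) := by
  have h2 : (finSuccEquivLast.symm.trans (s.trans finSuccEquivLast)) (some i) = none := by
    simp [Equiv.trans_apply, h]
  have h3 := Equiv.removeNone_none _ h2
  have h4 : (finSuccEquivLast.symm.trans (s.trans finSuccEquivLast)) none
      = finSuccEquivLast (s (Fin.last n)) := by
    simp [Equiv.trans_apply]
  rw [h4] at h3
  have := congrArg finSuccEquivLast.symm h3
  simpa [projPerm] using this

/-! #### `emb` lemmas -/

lemma emb_right_castSucc (w : WP G n) (i : Fin n) :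
    (emb (Nat.le_succ n) w).right i.castSucc = (w.right i).castSucc := by
  have hp : ((i.castSucc : Fin (n + 1)) : ℕ) < n := by simp
  have hr : (emb (Nat.le_succ n) w).right = w.right.extendDomain (castEquiv (Nat.le_succ n)) := rfl
  rw [hr, Equiv.Perm.extendDomain_apply_subtype w.right (castEquiv (Nat.le_succ n)) (b := i.castSucc) hp]
  apply Fin.ext
  simp [castEquiv]

lemma emb_right_last (w : WP G n) :
    (emb (Nat.le_succ n) w).right (Fin.last n) = Fin.last n := by
  have hp : ¬ (((Fin.last n : Fin (n + 1)) : ℕ) < n) := by simp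
  have hr : (emb (Nat.le_succ n) w).right = w.right.extendDomain (castEquiv (Nat.le_succ n)) := rfl
  rw [hr, Equiv.Perm.extendDomain_apply_not_subtype w.right (castEquiv (Nat.le_succ n)) (b := Fin.last n) hp]

lemma emb_right_inv_castSucc (w : WP G n) (i : Fin n) :
    ((emb (Nat.le_succ n) w).right)⁻¹ i.castSucc = (w.right⁻¹ i).castSucc := by
  rw [Equiv.Perm.inv_eq_iff_eq, emb_right_castSucc]
  simp

lemma emb_right_inv_last (w : WP G n) :
    ((emb (Nat.le_succ n) w).right)⁻¹ (Fin.last n) = Fin.last n := by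
  rw [Equiv.Perm.inv_eq_iff_eq, emb_right_last]

lemma emb_left_castSucc (w : WP G n) (i : Fin n) :
    (emb (Nat.le_succ n) w).left i.castSucc = w.left i := by
  have hp : ((i.castSucc : Fin (n + 1)) : ℕ) < n := by simp
  rw [emb]
  simp only [hp, dif_pos]
  congr

lemma emb_left_last (w : WP G n) :
    (emb (Nat.le_succ n) w).left (Fin.last n) = 1 := by
  have hp : ¬ (((Fin.last n : Fin (n + 1)) : ℕ) < n) := by simp
  rw [emb]
  simp only [hp, dif_neg, not_false_iff]

lemma emb_one : emb (Nat.le_succ n) (1 : WP G n) = 1 := by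
  apply SemidirectProduct.ext
  · funext i
    induction i using Fin.lastCases with
    | last => rw [emb_left_last]; rfl
    | cast i => rw [emb_left_castSucc]; rfl
  · show (1 : WP G n).right.extendDomain (castEquiv (Nat.le_succ n)) = _
    show Equiv.Perm.extendDomain 1 (castEquiv (Nat.le_succ n)) = _
    rw [Equiv.Perm.extendDomain_one]; rfl

lemma emb_mul (a b : WP G n) :
    emb (Nat.le_succ n) (a * b) = emb (Nat.le_succ n) a * emb (Nat.le_succ n) b := by
  apply SemidirectProduct.ext
  · funext i
    induction i using Fin.lastCases with
    | last =>
        rw [emb_left_last, mul_left_apply, emb_left_last, emb_right_inv_last,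
          emb_left_last, one_mul]
    | cast i =>
        rw [emb_left_castSucc, mul_left_apply, mul_left_apply, emb_left_castSucc,
          emb_right_inv_castSucc, emb_left_castSucc]
  · show (a * b).right.extendDomain (castEquiv (Nat.le_succ n)) = _
    rw [SemidirectProduct.mul_right, mul_right_apply]
    exact (Equiv.Perm.extendDomain_mul (castEquiv (Nat.le_succ n)) a.right b.right).symm

lemma emb_inv (a : WP G n) :
    emb (Nat.le_succ n) a⁻¹ = (emb (Nat.le_succ n) a)⁻¹ := by
  rw [eq_inv_iff_mul_eq_one, ← emb_mul, inv_mul_cancel, emb_one]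

/-! #### products over reversed ranges -/

/-- `seg f lo len = f (lo+len-1) * ⋯ * f (lo+1) * f lo`. -/
def seg (f : ℕ → G) (lo len : ℕ) : G :=
  (((List.range len).reverse).map fun j => f (lo + j)).prod

lemma seg_zero (f : ℕ → G) (lo : ℕ) : seg f lo 0 = 1 := rfl

lemma seg_succ (f : ℕ → G) (lo len : ℕ) :
    seg f lo (len + 1) = f (lo + len) * seg f lo len := by
  rw [seg, seg, List.range_succ, List.reverse_append]
  simp

lemma seg_one (f : ℕ → G) (lo : ℕ) : seg f lo 1 = f lo := by
  rw [seg_succ, seg_zero, mul_one, Nat.add_zero]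

lemma seg_add (f : ℕ → G) (lo a b : ℕ) :
    seg f lo (a + b) = seg f (lo + a) b * seg f lo a := by
  induction b with
  | zero => rw [Nat.add_zero, seg_zero, one_mul]
  | succ b ih =>
      rw [← Nat.add_assoc, seg_succ, seg_succ, ih, ← mul_assoc,
        Nat.add_assoc]

lemma seg_congr {f g : ℕ → G} {lo lo' : ℕ} (len : ℕ)
    (h : ∀ j < len, f (lo + j) = g (lo' + j)) :
    seg f lo len = seg g lo' len := by
  induction len with
  | zero => rfl
  | succ len ih =>
      rw [seg_succ, seg_succ, h len (Nat.lt_succ_self len),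
        ih fun j hj => h j (Nat.lt_succ_of_lt hj)]

lemma cycleProd_eq_seg (x : WP G n) (i : Fin n) :
    cycleProd x i = seg (fun j => x.left ((x.right ^ j) i)) 0
      (Function.minimalPeriod (⇑x.right) i) := by
  rw [cycleProd, seg]
  congr 1
  apply List.map_congr_left
  intro j _
  rw [Nat.zero_add]

/-! #### minimal period helpers -/

lemma perm_minimalPeriod_pos {α : Type*} [Finite α] (g : Equiv.Perm α) (a : α) :
    0 < Function.minimalPeriod (⇑g) a := by
  have : ∃ e : Fintype α, True := ⟨Fintype.ofFinite α, trivial⟩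
  obtain ⟨e, -⟩ := this
  refine Function.IsPeriodicPt.minimalPeriod_pos (orderOf_pos g) ?_
  show (⇑g)^[orderOf g] a = a
  rw [← Equiv.Perm.coe_pow, pow_orderOf_eq_one]
  rfl

lemma perm_minimalPeriod_eq {α β : Type*} [Finite α] [Finite β]
    (f : Equiv.Perm α) (g : Equiv.Perm β) (u : α → β) (hu : Function.Injective u) (a : α)
    (h : ∀ m, (g ^ m) (u a) = u ((f ^ m) a)) :
    Function.minimalPeriod (⇑g) (u a) = Function.minimalPeriod (⇑f) a := by
  have key : ∀ m, Function.IsPeriodicPt (⇑g) m (u a) ↔ Function.IsPeriodicPt (⇑f) m a := by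
    intro m
    show (⇑g)^[m] (u a) = u a ↔ (⇑f)^[m] a = a
    rw [← Equiv.Perm.coe_pow, ← Equiv.Perm.coe_pow, h m]
    exact ⟨fun hh => hu hh, fun hh => by rw [hh]⟩
  apply Nat.le_antisymm
  · exact Function.IsPeriodicPt.minimalPeriod_le (perm_minimalPeriod_pos f a)
      ((key _).mpr (Function.isPeriodicPt_minimalPeriod _ _))
  · exact Function.IsPeriodicPt.minimalPeriod_le (perm_minimalPeriod_pos g (u a))
      ((key _).mp (Function.isPeriodicPt_minimalPeriod _ _))

/-! #### counting over `Fin (n+1)` -/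

lemma natCard_subtype_succ (Q : Fin (n + 1) → Prop) [Decidable (Q (Fin.last n))] :
    Nat.card {i : Fin (n + 1) // Q i} =
      Nat.card {i : Fin n // Q i.castSucc} + (if Q (Fin.last n) then 1 else 0) := by
  classical
  have e : {i : Fin (n + 1) // Q i} ≃ {i : Fin n // Q i.castSucc} ⊕ PLift (Q (Fin.last n)) :=
    { toFun := fun x => if h : x.1 = Fin.last n then Sum.inr ⟨h ▸ x.2⟩
        else Sum.inl ⟨x.1.castPred h, by rw [Fin.castSucc_castPred]; exact x.2⟩
      invFun := fun y => y.elim (fun i => ⟨i.1.castSucc, i.2⟩) (fun h => ⟨Fin.last n, h.down⟩)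
      left_inv := fun x => by
        by_cases h : x.1 = Fin.last n
        · simp only [h, dif_pos]
          exact Subtype.ext h.symm
        · simp only [h, dif_neg, not_false_iff]
          exact Subtype.ext (Fin.castSucc_castPred _ h)
      right_inv := fun y => by
        rcases y with i | h
        · have : (i.1.castSucc : Fin (n + 1)) ≠ Fin.last n := (Fin.castSucc_lt_last i.1).ne
          simp only [Sum.elim_inl, this, dif_neg, not_false_iff, Sum.inl.injEq]
          exact (dif_neg this).trans (congrArg Sum.inl (Subtype.ext (by simp)))
        · simp }
  rw [Nat.card_congr e, Nat.card_sum]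
  congr 1
  by_cases h : Q (Fin.last n)
  · haveI : Unique (PLift (Q (Fin.last n))) := ⟨⟨⟨h⟩⟩, fun a => rfl⟩
    simp [h, Nat.card_unique]
  · haveI : IsEmpty (PLift (Q (Fin.last n))) := ⟨fun a => h a.down⟩
    simp [h]

/-! #### permutation power helpers -/

lemma perm_pow_succ_apply {α : Type*} (g : Equiv.Perm α) (m : ℕ) (a : α) :
    (g ^ (m + 1)) a = g ((g ^ m) a) := by
  rw [pow_succ']; exact Equiv.Perm.mul_apply _ _ _

lemma perm_pow_minimalPeriod_apply {α : Type*} (g : Equiv.Perm α) (a : α) :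
    (g ^ Function.minimalPeriod (⇑g) a) a = a := by
  have := Function.iterate_minimalPeriod (f := ⇑g) (x := a)
  rwa [← Equiv.Perm.coe_pow] at this

lemma perm_pow_injOn {α : Type*} (g : Equiv.Perm α) (a : α) {u v : ℕ}
    (hu : u < Function.minimalPeriod (⇑g) a) (hv : v < Function.minimalPeriod (⇑g) a)
    (h : (g ^ u) a = (g ^ v) a) : u = v := by
  refine Function.iterate_injOn_Iio_minimalPeriod (f := ⇑g) (x := a) hu hv ?_
  simpa only [← Equiv.Perm.coe_pow] using h

lemma perm_pow_mod_apply {α : Type*} (g : Equiv.Perm α) (a : α) (m : ℕ) :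
    (g ^ (m % Function.minimalPeriod (⇑g) a)) a = (g ^ m) a := by
  have := Function.iterate_mod_minimalPeriod_eq (f := ⇑g) (x := a) (n := m)
  simpa only [← Equiv.Perm.coe_pow] using this

/-! #### `proj` components -/

lemma proj_right (x : WP G (n + 1)) : (proj x).right = projPerm x.right := rfl

lemma proj_left (x : WP G (n + 1)) (i : Fin n) :
    (proj x).left i = if x.right (Fin.last n) = i.castSucc
      then x.left i.castSucc * x.left (Fin.last n) else x.left i.castSucc := rfl

/-! #### Case A: `x.right` fixes `last n` -/

section CaseA

variable (x : WP G (n + 1)) (hA : x.right (Fin.last n) = Fin.last n)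

include hA

lemma A_comm (i : Fin n) : x.right i.castSucc = (projPerm x.right i).castSucc := by
  refine (projPerm_castSucc_of_ne _ _ fun h => ?_).symm
  exact (Fin.castSucc_lt_last i).ne (x.right.injective (h.trans hA.symm))

lemma A_pow (m : ℕ) (i : Fin n) :
    (x.right ^ m) i.castSucc = ((projPerm x.right ^ m) i).castSucc := by
  induction m with
  | zero => simp
  | succ m ih =>
      rw [perm_pow_succ_apply, perm_pow_succ_apply, ih, A_comm x hA]

lemma A_pow_last (m : ℕ) : (x.right ^ m) (Fin.last n) = Fin.last n := by
  induction m with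
  | zero => simp
  | succ m ih => rw [perm_pow_succ_apply, ih, hA]

lemma A_period (i : Fin n) :
    Function.minimalPeriod (⇑x.right) i.castSucc
      = Function.minimalPeriod (⇑(projPerm x.right)) i :=
  perm_minimalPeriod_eq (projPerm x.right) x.right Fin.castSucc
    (Fin.castSucc_injective n) i (fun m => A_pow x hA m i)

lemma A_left (i : Fin n) : (proj x).left i = x.left i.castSucc := by
  rw [proj_left, if_neg]
  intro h
  exact (Fin.castSucc_lt_last i).ne (h.symm.trans hA)

lemma A_cycleProd (i : Fin n) : cycleProd x i.castSucc = cycleProd (proj x) i := by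
  rw [cycleProd_eq_seg, cycleProd_eq_seg, proj_right, A_period x hA]
  apply seg_congr
  intro j _
  simp only [Nat.zero_add]
  rw [A_pow x hA, ← proj_right, A_left x hA]

lemma A_cycleProd_last : cycleProd x (Fin.last n) = x.left (Fin.last n) := by
  have h1 : Function.minimalPeriod (⇑x.right) (Fin.last n) = 1 :=
    Function.minimalPeriod_eq_one_iff_isFixedPt.mpr hA
  rw [cycleProd_eq_seg, h1, seg_one]
  simp

end CaseA

/-! #### Case B: `x.right` moves `last n` -/

section CaseB

variable (x : WP G (n + 1)) (a b : Fin n)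
  (hB : x.right (Fin.last n) = b.castSucc) (ha : x.right a.castSucc = Fin.last n)

include hB ha in
lemma B_proj_a : projPerm x.right a = b := by
  have := projPerm_castSucc_of_eq x.right a ha
  rw [hB] at this
  exact Fin.castSucc_injective n this

include ha in
lemma B_comm {i : Fin n} (hia : i ≠ a) :
    x.right i.castSucc = (projPerm x.right i).castSucc := by
  refine (projPerm_castSucc_of_ne _ _ fun h => ?_).symm
  exact hia (Fin.castSucc_injective n (x.right.injective (h.trans ha.symm)))

include hB ha in
lemma B_forward (m : ℕ) (i : Fin n) :
    ∃ m', (x.right ^ m') i.castSucc = ((projPerm x.right ^ m) i).castSucc := by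
  induction m with
  | zero => exact ⟨0, by simp⟩
  | succ m ih =>
      obtain ⟨m', hm'⟩ := ih
      by_cases hia : (projPerm x.right ^ m) i = a
      · refine ⟨m' + 2, ?_⟩
        have h1 : (x.right ^ (m' + 1)) i.castSucc = Fin.last n := by
          rw [perm_pow_succ_apply, hm', hia, ha]
        rw [perm_pow_succ_apply, h1, hB, perm_pow_succ_apply, hia, B_proj_a x a b hB ha]
      · refine ⟨m' + 1, ?_⟩
        rw [perm_pow_succ_apply, hm', B_comm x a ha hia, perm_pow_succ_apply]

include hB ha in
lemma B_backward (m' : ℕ) (i j : Fin n)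
    (h : (x.right ^ m') i.castSucc = j.castSucc) :
    ∃ m, (projPerm x.right ^ m) i = j := by
  induction m' using Nat.strong_induction_on generalizing j with
  | _ m' ih =>
    match m' with
    | 0 =>
        exact ⟨0, by simpa using Fin.castSucc_injective n h⟩
    | (m'' + 1) =>
        by_cases hw : (x.right ^ m'') i.castSucc = Fin.last n
        · match m'' with
          | 0 => exact absurd hw (Fin.castSucc_lt_last i).ne
          | (m''' + 1) =>
              have hw' : (x.right ^ m''') i.castSucc = a.castSucc := by
                apply x.right.injective
                rw [← perm_pow_succ_apply, hw, ha]
              obtain ⟨m, hm⟩ := ih m''' (by omega) a hw'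
              have hj : j = b := by
                apply Fin.castSucc_injective n
                rw [← h, perm_pow_succ_apply, hw, hB]
              exact ⟨m + 1, by rw [perm_pow_succ_apply, hm, B_proj_a x a b hB ha, hj]⟩
        · obtain ⟨j', hj'⟩ := Fin.exists_castSucc_eq.mpr hw
          have hja : j' ≠ a := by
            intro hh
            rw [perm_pow_succ_apply, ← hj', hh, ha] at h
            exact (Fin.castSucc_lt_last j).ne h.symm
          have hstep : (projPerm x.right) j' = j := by
            apply Fin.castSucc_injective n
            rw [← B_comm x a ha hja, hj', ← perm_pow_succ_apply, h]
          obtain ⟨m, hm⟩ := ih m'' (by omega) j' hj'.symm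
          exact ⟨m + 1, by rw [perm_pow_succ_apply, hm, hstep]⟩

include hB ha in
lemma B_min (i : Fin n) :
    (∀ m, i.castSucc ≤ (x.right ^ m) i.castSucc)
      ↔ (∀ m, i ≤ (projPerm x.right ^ m) i) := by
  constructor
  · intro h m
    obtain ⟨m', hm'⟩ := B_forward x a b hB ha m i
    have := h m'
    rw [hm'] at this
    exact Fin.castSucc_le_castSucc_iff.mp this
  · intro h m'
    by_cases hw : (x.right ^ m') i.castSucc = Fin.last n
    · rw [hw]; exact Fin.le_last _
    · obtain ⟨j, hj⟩ := Fin.exists_castSucc_eq.mpr hw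
      obtain ⟨m, hm⟩ := B_backward x a b hB ha m' i j hj.symm
      rw [← hj]
      exact Fin.castSucc_le_castSucc_iff.mpr (hm ▸ h m)

include hB in
lemma B_last_not_min : ¬ (∀ m, Fin.last n ≤ (x.right ^ m) (Fin.last n)) := by
  intro h
  have := h 1
  rw [pow_one, hB] at this
  exact absurd this (not_le.mpr (Fin.castSucc_lt_last b))

include hB ha in
lemma B_pow_i {i : Fin n} (hni : ∀ m, (projPerm x.right ^ m) i ≠ a) (m : ℕ) :
    (x.right ^ m) i.castSucc = ((projPerm x.right ^ m) i).castSucc := by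
  induction m with
  | zero => simp
  | succ m ih => rw [perm_pow_succ_apply, ih, B_comm x a ha (hni m), perm_pow_succ_apply]

include hB ha in
lemma B_ne_b {i : Fin n} (hni : ∀ m, (projPerm x.right ^ m) i ≠ a) (m : ℕ) :
    (projPerm x.right ^ m) i ≠ b := by
  intro hm
  match m with
  | 0 =>
      have hq := perm_minimalPeriod_pos (projPerm x.right) i
      apply hni (Function.minimalPeriod (⇑(projPerm x.right)) i - 1)
      apply (projPerm x.right).injective
      rw [← perm_pow_succ_apply, Nat.sub_add_cancel hq, perm_pow_minimalPeriod_apply,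
        show i = b by simpa using hm, ← B_proj_a x a b hB ha]
  | (m' + 1) =>
      apply hni m'
      apply (projPerm x.right).injective
      rw [← perm_pow_succ_apply, hm, ← B_proj_a x a b hB ha]

include hB ha in
lemma B_cycleProd_i {i : Fin n} (hni : ∀ m, (projPerm x.right ^ m) i ≠ a) :
    cycleProd x i.castSucc = cycleProd (proj x) i := by
  have hper : Function.minimalPeriod (⇑x.right) i.castSucc
      = Function.minimalPeriod (⇑(projPerm x.right)) i :=
    perm_minimalPeriod_eq _ _ Fin.castSucc (Fin.castSucc_injective n) i
      (fun m => B_pow_i x a b hB ha hni m)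
  rw [cycleProd_eq_seg, cycleProd_eq_seg, proj_right, hper]
  apply seg_congr
  intro j _
  simp only [Nat.zero_add]
  rw [B_pow_i x a b hB ha hni, proj_left, if_neg]
  intro h
  rw [hB] at h
  exact B_ne_b x a b hB ha hni j (Fin.castSucc_injective n h).symm

include hB ha in
lemma B_cycleProd_ii {i : Fin n} (hex : ∃ m, (projPerm x.right ^ m) i = a) :
    IsConj (cycleProd x i.castSucc) (cycleProd (proj x) i) := by
  classical
  set pp := projPerm x.right with hpp
  set q := Function.minimalPeriod (⇑pp) i with hq
  have hqpos : 0 < q := perm_minimalPeriod_pos pp i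
  set m₀ := Nat.find hex with hm₀def
  have hm₀ : (pp ^ m₀) i = a := Nat.find_spec hex
  have hmin : ∀ j < m₀, (pp ^ j) i ≠ a := fun j hj => Nat.find_min hex hj
  have hm₀q : m₀ < q := by
    have h1 : (pp ^ (m₀ % q)) i = a := by rw [hq, perm_pow_mod_apply]; exact hm₀
    have h2 : m₀ ≤ m₀ % q := Nat.find_min' hex h1
    exact lt_of_le_of_lt h2 (Nat.mod_lt _ hqpos)
  have G1 : ∀ j, j ≤ m₀ → (x.right ^ j) i.castSucc = ((pp ^ j) i).castSucc := by
    intro j hj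
    induction j with
    | zero => simp
    | succ j ih =>
        rw [perm_pow_succ_apply, ih (Nat.le_of_succ_le hj),
          B_comm x a ha (hmin j (Nat.lt_of_succ_le hj)), perm_pow_succ_apply]
  have G2 : (x.right ^ (m₀ + 1)) i.castSucc = Fin.last n := by
    rw [perm_pow_succ_apply, G1 m₀ le_rfl, hm₀, ha]
  have hppb : (pp ^ (m₀ + 1)) i = b := by
    rw [perm_pow_succ_apply, hm₀]; exact B_proj_a x a b hB ha
  have G3 : ∀ d, 1 ≤ d → m₀ + d ≤ q →
      (x.right ^ (m₀ + d + 1)) i.castSucc = ((pp ^ (m₀ + d)) i).castSucc := by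
    intro d hd hdq
    induction d with
    | zero => exact absurd hd (by omega)
    | succ d ih =>
        rcases Nat.eq_or_lt_of_le hd with h1 | h1
        · have hd0 : d = 0 := by omega
          subst hd0
          rw [show m₀ + 1 + 1 = (m₀ + 1) + 1 from rfl, perm_pow_succ_apply, G2, hB, hppb]
        · have hd1 : 1 ≤ d := by omega
          have ih' := ih hd1 (by omega)
          have hne : (pp ^ (m₀ + d)) i ≠ a := by
            intro hh
            have := perm_pow_injOn pp i (u := m₀ + d) (v := m₀)
              (by omega) (by omega) (by rw [hh, hm₀])
            omega
          rw [show m₀ + (d + 1) + 1 = (m₀ + d + 1) + 1 by omega, perm_pow_succ_apply, ih',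
            B_comm x a ha hne, ← perm_pow_succ_apply,
            show m₀ + d + 1 = m₀ + (d + 1) by omega]
  have hper : Function.minimalPeriod (⇑x.right) i.castSucc = q + 1 := by
    have hqq : (x.right ^ (q + 1)) i.castSucc = i.castSucc := by
      have h3 := G3 (q - m₀) (by omega) (by omega)
      rw [show m₀ + (q - m₀) = q by omega] at h3
      rw [h3, hq, perm_pow_minimalPeriod_apply]
    have hub : Function.minimalPeriod (⇑x.right) i.castSucc ≤ q + 1 :=
      Function.IsPeriodicPt.minimalPeriod_le (Nat.succ_pos q)
        (by show (⇑x.right)^[q + 1] _ = _; rwa [← Equiv.Perm.coe_pow])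
    have hlb : ¬ Function.minimalPeriod (⇑x.right) i.castSucc ≤ q := by
      intro hle
      set r := Function.minimalPeriod (⇑x.right) i.castSucc with hr
      have hrpos : 0 < r := perm_minimalPeriod_pos x.right i.castSucc
      have hrp : (x.right ^ r) i.castSucc = i.castSucc :=
        perm_pow_minimalPeriod_apply x.right i.castSucc
      rcases lt_trichotomy r (m₀ + 1) with h1 | h1 | h1
      · have h2 := G1 r (by omega)
        rw [hrp] at h2
        have h3 : (pp ^ r) i = (pp ^ 0) i := by
          simpa using (Fin.castSucc_injective n h2).symm
        have := perm_pow_injOn pp i (u := r) (v := 0) (by omega) (by omega) h3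
        omega
      · rw [← h1] at G2
        rw [hrp] at G2
        exact (Fin.castSucc_lt_last i).ne G2
      · have h2 := G3 (r - 1 - m₀) (by omega) (by omega)
        rw [show m₀ + (r - 1 - m₀) = r - 1 by omega, show r - 1 + 1 = r by omega, hrp] at h2
        have h3 : (pp ^ (r - 1)) i = (pp ^ 0) i := by
          simpa using Fin.castSucc_injective n h2.symm
        have := perm_pow_injOn pp i (u := r - 1) (v := 0) (by omega) (by omega) h3
        omega
    omega
  set u : ℕ → G := fun j => x.left ((pp ^ j) i).castSucc with hu
  set v : G := x.left (Fin.last n) with hv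
  set L : ℕ → G := fun j => x.left ((x.right ^ j) i.castSucc) with hL
  set R : ℕ → G := fun j => (proj x).left ((pp ^ j) i) with hR
  have hLHS : cycleProd x i.castSucc = seg L 0 (q + 1) := by
    rw [cycleProd_eq_seg, hper]
  have hRHS : cycleProd (proj x) i = seg R 0 q := by
    rw [cycleProd_eq_seg]; rfl
  have hRu : ∀ j, (pp ^ j) i ≠ b → R j = u j := by
    intro j hj
    show (proj x).left _ = _
    rw [proj_left, if_neg]
    intro h
    rw [hB] at h
    exact hj (Fin.castSucc_injective n h).symm
  have hRb : ∀ j, (pp ^ j) i = b → R j = u j * v := by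
    intro j hj
    show (proj x).left _ = _
    rw [proj_left, if_pos]
    rw [hB, hj]
  have hG1L : ∀ j < m₀ + 1, L (0 + j) = u (0 + j) := by
    intro j hj
    simp only [Nat.zero_add, hL, hu]
    rw [G1 j (by omega)]
  rcases Nat.lt_or_ge (m₀ + 1) q with hlt | hge
  · -- b occurs at position m₀ + 1 < q
    obtain ⟨k, hk⟩ : ∃ k, q = m₀ + 2 + k := ⟨q - m₀ - 2, by omega⟩
    have hbpos : ∀ j < q, j ≠ m₀ + 1 → (pp ^ j) i ≠ b := by
      intro j hjq hjne hj
      have := perm_pow_injOn pp i (u := j) (v := m₀ + 1) (by omega) (by omega)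
        (by rw [hj, hppb])
      omega
    have hLbot : seg L 0 (m₀ + 1) = seg u 0 (m₀ + 1) := seg_congr (m₀ + 1) hG1L
    have hLtop : seg L (m₀ + 2) (1 + k) = seg u (m₀ + 1) (1 + k) := by
      apply seg_congr
      intro j hj
      simp only [hL, hu]
      rw [show m₀ + 2 + j = m₀ + (j + 1) + 1 by omega, G3 (j + 1) (by omega) (by omega),
        show m₀ + (j + 1) = m₀ + 1 + j by omega]
    have hRbot : seg R 0 (m₀ + 1) = seg u 0 (m₀ + 1) := by
      apply seg_congr
      intro j hj
      exact hRu _ (hbpos _ (by omega) (by omega))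
    have hRtop : seg R (m₀ + 2) k = seg u (m₀ + 2) k := by
      apply seg_congr
      intro j hj
      exact hRu _ (hbpos _ (by omega) (by omega))
    have eL : seg L 0 (q + 1) = seg u (m₀ + 1) (1 + k) * v * seg u 0 (m₀ + 1) := by
      calc seg L 0 (q + 1) = seg L 0 ((m₀ + 1) + (1 + (1 + k))) := by
            rw [show q + 1 = (m₀ + 1) + (1 + (1 + k)) by omega]
        _ = seg L (0 + (m₀ + 1)) (1 + (1 + k)) * seg L 0 (m₀ + 1) := seg_add _ _ _ _
        _ = (seg L (m₀ + 1 + 1) (1 + k) * seg L (m₀ + 1) 1) * seg L 0 (m₀ + 1) := by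
            rw [Nat.zero_add, seg_add]
        _ = seg u (m₀ + 1) (1 + k) * v * seg u 0 (m₀ + 1) := by
            rw [seg_one, hLbot, show m₀ + 1 + 1 = m₀ + 2 from rfl, hLtop]
            simp only [hL, hv]
            rw [G2]
    have eR : seg R 0 q = seg u (m₀ + 2) k * (u (m₀ + 1) * v) * seg u 0 (m₀ + 1) := by
      calc seg R 0 q = seg R 0 ((m₀ + 1) + (1 + k)) := by
            rw [show q = (m₀ + 1) + (1 + k) by omega]
        _ = seg R (0 + (m₀ + 1)) (1 + k) * seg R 0 (m₀ + 1) := seg_add _ _ _ _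
        _ = (seg R (m₀ + 1 + 1) k * seg R (m₀ + 1) 1) * seg R 0 (m₀ + 1) := by
            rw [Nat.zero_add, seg_add]
        _ = seg u (m₀ + 2) k * (u (m₀ + 1) * v) * seg u 0 (m₀ + 1) := by
            rw [seg_one, hRbot, show m₀ + 1 + 1 = m₀ + 2 from rfl, hRtop, hRb _ hppb]
    have hsplit : seg u (m₀ + 1) (1 + k) = seg u (m₀ + 2) k * u (m₀ + 1) := by
      rw [seg_add, seg_one, show m₀ + 1 + 1 = m₀ + 2 from rfl]
    have : cycleProd x i.castSucc = cycleProd (proj x) i := by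
      rw [hLHS, hRHS, eL, eR, hsplit]
      group
    rw [this]
  · -- m₀ + 1 = q : b occurs at position 0
    have heq : m₀ + 1 = q := by omega
    have hib : (pp ^ 0) i = b := by
      have hqi : (pp ^ q) i = i := by rw [hq, perm_pow_minimalPeriod_apply]
      rw [← heq] at hqi
      rw [pow_zero]
      simp only [Equiv.Perm.coe_one, id_eq]
      rw [← hqi, hppb]
    have hbpos : ∀ j, 0 < j → j < q → (pp ^ j) i ≠ b := by
      intro j hj0 hjq hj
      have := perm_pow_injOn pp i (u := j) (v := 0) (by omega) (by omega)
        (by rw [hj, hib])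
      omega
    have hLbot : seg L 0 (m₀ + 1) = seg u 0 (m₀ + 1) := seg_congr (m₀ + 1) hG1L
    have hRmid : seg R 1 m₀ = seg u 1 m₀ := by
      apply seg_congr
      intro j hj
      exact hRu _ (hbpos _ (by omega) (by omega))
    have husplit : seg u 0 (m₀ + 1) = seg u 1 m₀ * u 0 := by
      rw [show m₀ + 1 = 1 + m₀ from by omega, seg_add, Nat.zero_add, seg_one]
    have eL : seg L 0 (q + 1) = v * (seg u 1 m₀ * u 0) := by
      calc seg L 0 (q + 1) = seg L 0 ((m₀ + 1) + 1) := by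
            rw [show q + 1 = (m₀ + 1) + 1 by omega]
        _ = seg L (0 + (m₀ + 1)) 1 * seg L 0 (m₀ + 1) := seg_add _ _ _ _
        _ = v * (seg u 1 m₀ * u 0) := by
            rw [Nat.zero_add, seg_one, hLbot, husplit]
            simp only [hL, hv]
            rw [G2]
    have eR : seg R 0 q = seg u 1 m₀ * u 0 * v := by
      calc seg R 0 q = seg R 0 (1 + m₀) := by rw [show q = 1 + m₀ by omega]
        _ = seg R (0 + 1) m₀ * seg R 0 1 := seg_add _ _ _ _
        _ = seg u 1 m₀ * u 0 * v := by
            rw [Nat.zero_add, seg_one, hRmid, hRb 0 hib]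
            group
    rw [hLHS, hRHS, eL, eR]
    rw [isConj_iff]
    refine ⟨v⁻¹, ?_⟩
    group

include hB ha in
lemma B_cycleProd (i : Fin n) :
    IsConj (cycleProd x i.castSucc) (cycleProd (proj x) i) := by
  by_cases hex : ∃ m, (projPerm x.right ^ m) i = a
  · exact B_cycleProd_ii x a b hB ha hex
  · push_neg at hex
    rw [B_cycleProd_i x a b hB ha hex]

end CaseB

open Classical in
lemma cycleCount_proj (x : WP G (n + 1)) (c : Set G)
    (hc : ∀ g g', IsConj g g' → g ∈ c → g' ∈ c) :
    cycleCount x c = cycleCount (proj x) c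
      + (if x.right (Fin.last n) = Fin.last n ∧ x.left (Fin.last n) ∈ c then 1 else 0) := by
  classical
  rw [cycleCount, natCard_subtype_succ, cycleCount]
  congr 1
  · apply Nat.card_congr
    apply Equiv.subtypeEquivRight
    intro i
    show _ ↔ (∀ m : ℕ, i ≤ ((proj x).right ^ m) i) ∧ _
    rw [proj_right]
    by_cases hA : x.right (Fin.last n) = Fin.last n
    · constructor
      · rintro ⟨h1, h2⟩
        refine ⟨fun m => ?_, ?_⟩
        · have := h1 m
          rw [A_pow x hA] at this
          exact Fin.castSucc_le_castSucc_iff.mp this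
        · rwa [← A_cycleProd x hA]
      · rintro ⟨h1, h2⟩
        refine ⟨fun m => ?_, ?_⟩
        · rw [A_pow x hA]
          exact Fin.castSucc_le_castSucc_iff.mpr (h1 m)
        · rwa [A_cycleProd x hA]
    · obtain ⟨b, hb⟩ := Fin.exists_castSucc_eq.mpr hA
      have ha' : x.right⁻¹ (Fin.last n) ≠ Fin.last n := by
        intro h
        apply hA
        conv_lhs => rw [← h]
        simp
      obtain ⟨a, ha2⟩ := Fin.exists_castSucc_eq.mpr ha'
      have ha : x.right a.castSucc = Fin.last n := by
        rw [ha2]; simp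
      have hconj := B_cycleProd x a b hb.symm ha i
      constructor
      · rintro ⟨h1, h2⟩
        exact ⟨(B_min x a b hb.symm ha i).mp h1, hc _ _ hconj h2⟩
      · rintro ⟨h1, h2⟩
        exact ⟨(B_min x a b hb.symm ha i).mpr h1, hc _ _ hconj.symm h2⟩
  · by_cases hA : x.right (Fin.last n) = Fin.last n
    · have hQ : ((∀ m : ℕ, Fin.last n ≤ (x.right ^ m) (Fin.last n)) ∧
          cycleProd x (Fin.last n) ∈ c)
          ↔ (x.right (Fin.last n) = Fin.last n ∧ x.left (Fin.last n) ∈ c) := by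
        constructor
        · rintro ⟨-, h2⟩
          exact ⟨hA, by rwa [A_cycleProd_last x hA] at h2⟩
        · rintro ⟨-, h2⟩
          exact ⟨fun m => le_of_eq (A_pow_last x hA m).symm,
            by rwa [A_cycleProd_last x hA]⟩
      rw [if_congr hQ rfl rfl]
    · obtain ⟨b, hb⟩ := Fin.exists_castSucc_eq.mpr hA
      rw [if_neg, if_neg]
      · exact fun h => hA h.1
      · intro h
        exact B_last_not_min x b hb.symm h.1

/-! #### `proj` is equivariant -/

lemma projPerm_mul_right (s : Equiv.Perm (Fin (n + 1))) (w : WP G n) :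
    projPerm (s * (emb (Nat.le_succ n) w).right) = projPerm s * w.right := by
  apply Equiv.ext
  intro i
  apply Fin.castSucc_injective n
  show (projPerm (s * (emb (Nat.le_succ n) w).right) i).castSucc
    = (projPerm s (w.right i)).castSucc
  by_cases hcase : s (w.right i).castSucc = Fin.last n
  · rw [projPerm_castSucc_of_eq _ _ (by
      rw [Equiv.Perm.mul_apply, emb_right_castSucc, hcase]),
      projPerm_castSucc_of_eq _ _ hcase, Equiv.Perm.mul_apply, emb_right_last]
  · rw [projPerm_castSucc_of_ne _ _ (by
      rw [Equiv.Perm.mul_apply, emb_right_castSucc]; exact hcase),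
      projPerm_castSucc_of_ne _ _ hcase, Equiv.Perm.mul_apply, emb_right_castSucc]

lemma projPerm_mul_left (v : WP G n) (s : Equiv.Perm (Fin (n + 1))) :
    projPerm ((emb (Nat.le_succ n) v).right * s) = v.right * projPerm s := by
  apply Equiv.ext
  intro i
  apply Fin.castSucc_injective n
  show (projPerm ((emb (Nat.le_succ n) v).right * s) i).castSucc
    = (v.right (projPerm s i)).castSucc
  by_cases hcase : s i.castSucc = Fin.last n
  · have hlast : s (Fin.last n) ≠ Fin.last n := by
      intro h
      exact (Fin.castSucc_lt_last i).ne (s.injective (hcase.trans h.symm))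
    obtain ⟨j, hj⟩ := Fin.exists_castSucc_eq.mpr hlast
    have h1 : projPerm s i = j := by
      apply Fin.castSucc_injective n
      rw [projPerm_castSucc_of_eq _ _ hcase, hj]
    rw [projPerm_castSucc_of_eq _ _ (by
        rw [Equiv.Perm.mul_apply, hcase, emb_right_last]),
      Equiv.Perm.mul_apply, ← hj, emb_right_castSucc, h1]
  · obtain ⟨j, hj⟩ := Fin.exists_castSucc_eq.mpr hcase
    have h1 : projPerm s i = j := by
      apply Fin.castSucc_injective n
      rw [projPerm_castSucc_of_ne _ _ hcase, hj]
    rw [projPerm_castSucc_of_ne _ _ (by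
        rw [Equiv.Perm.mul_apply, ← hj, emb_right_castSucc]
        exact (Fin.castSucc_lt_last _).ne),
      Equiv.Perm.mul_apply, ← hj, emb_right_castSucc, h1]

lemma proj_mul_right (x : WP G (n + 1)) (w : WP G n) :
    proj (x * emb (Nat.le_succ n) w) = proj x * w := by
  apply SemidirectProduct.ext
  · funext i
    have hrl : (x * emb (Nat.le_succ n) w).right (Fin.last n) = x.right (Fin.last n) := by
      rw [mul_right_apply, Equiv.Perm.mul_apply, emb_right_last]
    rw [proj_left, hrl, mul_left_apply, mul_left_apply, mul_left_apply]
    by_cases hcond : x.right (Fin.last n) = i.castSucc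
    · rw [if_pos hcond, proj_left, if_pos hcond]
      have h1 : x.right⁻¹ i.castSucc = Fin.last n := by
        rw [Equiv.Perm.inv_eq_iff_eq, hcond]
      have hlast' : x.right⁻¹ (Fin.last n) ≠ Fin.last n := by
        intro h
        rw [Equiv.Perm.inv_eq_iff_eq] at h
        exact (Fin.castSucc_lt_last i).ne (h.trans hcond).symm
      obtain ⟨a, ha2⟩ := Fin.exists_castSucc_eq.mpr hlast'
      have ha : x.right a.castSucc = Fin.last n := by
        rw [ha2]; simp
      have hpa : (proj x).right⁻¹ i = a := by
        rw [Equiv.Perm.inv_eq_iff_eq]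
        apply Fin.castSucc_injective n
        rw [proj_right, projPerm_castSucc_of_eq _ _ ha, hcond]
      rw [h1, emb_left_last, hpa, ← ha2, emb_left_castSucc, mul_one]
      group
    · rw [if_neg hcond, proj_left, if_neg hcond]
      have h1 : x.right⁻¹ i.castSucc ≠ Fin.last n := by
        intro h
        rw [Equiv.Perm.inv_eq_iff_eq] at h
        exact hcond h.symm
      obtain ⟨j, hj⟩ := Fin.exists_castSucc_eq.mpr h1
      have hji : x.right j.castSucc = i.castSucc := by
        rw [hj]; simp
      have hpj : (proj x).right⁻¹ i = j := by
        rw [Equiv.Perm.inv_eq_iff_eq]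
        apply Fin.castSucc_injective n
        rw [proj_right,
          projPerm_castSucc_of_ne _ _ (by rw [hji]; exact (Fin.castSucc_lt_last i).ne), hji]
      rw [hpj, ← hj, emb_left_castSucc]
  · show projPerm ((x * emb (Nat.le_succ n) w).right) = ((proj x) * w).right
    rw [mul_right_apply, projPerm_mul_right, mul_right_apply, proj_right]

lemma proj_mul_left (v : WP G n) (x : WP G (n + 1)) :
    proj (emb (Nat.le_succ n) v * x) = v * proj x := by
  apply SemidirectProduct.ext
  · funext i
    have hrl : (emb (Nat.le_succ n) v * x).right (Fin.last n)
        = (emb (Nat.le_succ n) v).right (x.right (Fin.last n)) := by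
      rw [mul_right_apply, Equiv.Perm.mul_apply]
    have hinvc : ((emb (Nat.le_succ n) v).right⁻¹) i.castSucc = (v.right⁻¹ i).castSucc :=
      emb_right_inv_castSucc v i
    have hcondiff : ((emb (Nat.le_succ n) v).right (x.right (Fin.last n)) = i.castSucc)
        ↔ (x.right (Fin.last n) = (v.right⁻¹ i).castSucc) := by
      rw [← hinvc, ← Equiv.Perm.eq_inv_iff_eq]
    have hL1 : (emb (Nat.le_succ n) v * x).left i.castSucc
        = v.left i * x.left ((v.right⁻¹ i).castSucc) := by
      rw [mul_left_apply, emb_left_castSucc, hinvc]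
    have hL2 : (emb (Nat.le_succ n) v * x).left (Fin.last n) = x.left (Fin.last n) := by
      rw [mul_left_apply, emb_left_last, emb_right_inv_last, one_mul]
    rw [proj_left, hrl, hL1, hL2, mul_left_apply]
    by_cases hcond : x.right (Fin.last n) = (v.right⁻¹ i).castSucc
    · rw [if_pos (hcondiff.mpr hcond), proj_left, if_pos hcond]
      group
    · rw [if_neg (fun h => hcond (hcondiff.mp h)), proj_left, if_neg hcond]
  · show projPerm ((emb (Nat.le_succ n) v * x).right) = (v * proj x).right
    rw [mul_right_apply, projPerm_mul_left, mul_right_apply, proj_right]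

/-! #### behaviour of the `last` slot under sandwiching -/

lemma mul3_right_last (v w : WP G n) (x : WP G (n + 1)) :
    (emb (Nat.le_succ n) v * x * emb (Nat.le_succ n) w).right (Fin.last n)
      = (emb (Nat.le_succ n) v).right (x.right (Fin.last n)) := by
  rw [mul_right_apply, mul_right_apply, Equiv.Perm.mul_apply, Equiv.Perm.mul_apply,
    emb_right_last]

lemma mul3_fix_iff (v w : WP G n) (x : WP G (n + 1)) :
    (emb (Nat.le_succ n) v * x * emb (Nat.le_succ n) w).right (Fin.last n) = Fin.last n
      ↔ x.right (Fin.last n) = Fin.last n := by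
  rw [mul3_right_last]
  constructor
  · intro h
    have := emb_right_last v
    exact (emb (Nat.le_succ n) v).right.injective (h.trans this.symm)
  · intro h
    rw [h, emb_right_last]

lemma mul3_left_last (v w : WP G n) (x : WP G (n + 1))
    (hfix : x.right (Fin.last n) = Fin.last n) :
    (emb (Nat.le_succ n) v * x * emb (Nat.le_succ n) w).left (Fin.last n)
      = x.left (Fin.last n) := by
  have hxinv : x.right⁻¹ (Fin.last n) = Fin.last n := by
    rw [Equiv.Perm.inv_eq_iff_eq, hfix]
  rw [mul_left_apply, mul_left_apply, mul_right_apply, mul_inv_rev, emb_left_last,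
    emb_right_inv_last, one_mul, Equiv.Perm.mul_apply, emb_right_inv_last, hxinv,
    emb_left_last, mul_one]

/-! #### the insertion bijection -/

/-- Insert a new point `last n` into `y`, with image `j` and marker `u`. -/
def ins (y : WP G n) (j : Fin (n + 1)) (u : G) : WP G (n + 1) :=
  ⟨fun i' => Fin.lastCases u
      (fun i => if j = i.castSucc then y.left i * u⁻¹ else y.left i) i',
    Equiv.swap (Fin.last n) j * y.right.extendDomain (castEquiv (Nat.le_succ n))⟩

lemma extend_castSucc (σ : Equiv.Perm (Fin n)) (i : Fin n) :
    σ.extendDomain (castEquiv (Nat.le_succ n)) i.castSucc = (σ i).castSucc := by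
  have hp : ((i.castSucc : Fin (n + 1)) : ℕ) < n := by simp
  rw [Equiv.Perm.extendDomain_apply_subtype σ (castEquiv (Nat.le_succ n)) (b := i.castSucc) hp]
  apply Fin.ext
  simp [castEquiv]

lemma extend_last (σ : Equiv.Perm (Fin n)) :
    σ.extendDomain (castEquiv (Nat.le_succ n)) (Fin.last n) = Fin.last n := by
  have hp : ¬ (((Fin.last n : Fin (n + 1)) : ℕ) < n) := by simp
  rw [Equiv.Perm.extendDomain_apply_not_subtype σ (castEquiv (Nat.le_succ n)) (b := Fin.last n) hp]

lemma ins_right_last (y : WP G n) (j : Fin (n + 1)) (u : G) :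
    (ins y j u).right (Fin.last n) = j := by
  show (Equiv.swap (Fin.last n) j * y.right.extendDomain (castEquiv (Nat.le_succ n)))
    (Fin.last n) = j
  rw [Equiv.Perm.mul_apply, extend_last, Equiv.swap_apply_left]

lemma ins_left_last (y : WP G n) (j : Fin (n + 1)) (u : G) :
    (ins y j u).left (Fin.last n) = u := by
  show Fin.lastCases (motive := fun _ => G) u
    (fun i => if j = i.castSucc then y.left i * u⁻¹ else y.left i) (Fin.last n) = u
  rw [Fin.lastCases_last]

lemma ins_left_castSucc (y : WP G n) (j : Fin (n + 1)) (u : G) (i : Fin n) :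
    (ins y j u).left i.castSucc
      = if j = i.castSucc then y.left i * u⁻¹ else y.left i := by
  show Fin.lastCases (motive := fun _ => G) u
    (fun i => if j = i.castSucc then y.left i * u⁻¹ else y.left i) i.castSucc = _
  rw [Fin.lastCases_castSucc]

lemma ins_right_castSucc (y : WP G n) (j : Fin (n + 1)) (u : G) (i : Fin n) :
    (ins y j u).right i.castSucc
      = if j = (y.right i).castSucc then Fin.last n else (y.right i).castSucc := by
  show (Equiv.swap (Fin.last n) j * y.right.extendDomain (castEquiv (Nat.le_succ n)))
    i.castSucc = _
  rw [Equiv.Perm.mul_apply, extend_castSucc]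
  by_cases h : j = (y.right i).castSucc
  · rw [if_pos h, ← h, Equiv.swap_apply_right]
  · rw [if_neg h, Equiv.swap_apply_of_ne_of_ne (Fin.castSucc_lt_last _).ne (fun hh => h hh.symm)]

lemma proj_ins (y : WP G n) (j : Fin (n + 1)) (u : G) :
    proj (ins y j u) = y := by
  apply SemidirectProduct.ext
  · funext i
    rw [proj_left, ins_right_last, ins_left_castSucc, ins_left_last]
    by_cases h : j = i.castSucc
    · rw [if_pos h, if_pos h, inv_mul_cancel_right]
    · rw [if_neg h, if_neg h]
  · show projPerm (ins y j u).right = y.right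
    apply Equiv.ext
    intro i
    apply Fin.castSucc_injective n
    by_cases h : j = (y.right i).castSucc
    · rw [projPerm_castSucc_of_eq _ _ (by rw [ins_right_castSucc, if_pos h]),
        ins_right_last, h]
    · rw [projPerm_castSucc_of_ne _ _ (by
        rw [ins_right_castSucc, if_neg h]; exact (Fin.castSucc_lt_last _).ne),
        ins_right_castSucc, if_neg h]

lemma ins_proj (x : WP G (n + 1)) :
    ins (proj x) (x.right (Fin.last n)) (x.left (Fin.last n)) = x := by
  apply SemidirectProduct.ext
  · funext i'
    induction i' using Fin.lastCases with
    | last => rw [ins_left_last]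
    | cast i =>
        rw [ins_left_castSucc, proj_left]
        by_cases h : x.right (Fin.last n) = i.castSucc
        · rw [if_pos h, if_pos h, mul_inv_cancel_right]
        · rw [if_neg h, if_neg h]
  · apply Equiv.ext
    intro i'
    induction i' using Fin.lastCases with
    | last => rw [ins_right_last]
    | cast i =>
        rw [ins_right_castSucc]
        show _ = x.right i.castSucc
        rw [proj_right]
        by_cases h : x.right i.castSucc = Fin.last n
        · rw [if_pos (by rw [projPerm_castSucc_of_eq _ _ h]), h]
        · rw [if_neg, projPerm_castSucc_of_ne _ _ h]
          rw [projPerm_castSucc_of_ne _ _ h]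
          intro hh
          exact (Fin.castSucc_lt_last i).ne.symm (x.right.injective hh)

/-- The fiber decomposition of `G ≀ S(n+1)` over `G ≀ S(n)`. -/
def insEquiv : (WP G n × Fin (n + 1) × G) ≃ WP G (n + 1) where
  toFun p := ins p.1 p.2.1 p.2.2
  invFun x := (proj x, x.right (Fin.last n), x.left (Fin.last n))
  left_inv p := by
    refine Prod.ext ?_ (Prod.ext ?_ ?_)
    · exact proj_ins _ _ _
    · exact ins_right_last _ _ _
    · exact ins_left_last _ _ _
  right_inv x := ins_proj x

end WP

open WP in
/-- `L` is an isometric embedding of `L²(G≀S(n), uniform)` into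
`L²(G≀S(n+1), uniform)` intertwining the two-sided regular representations. -/
theorem Lop_isometry_intertwines {G : Type*} [Group G] [Fintype G] {k n : ℕ}
    (z : Fin k → ℂ) (hz : ∀ l, z l ≠ 0) (c : Fin k → Set G)
    (hconj : ∀ l, IsConjClass (c l)) (hpart : ∀ g : G, ∃! l, g ∈ c l) :
    (∀ ψ : WP G n → ℂ,
      (1 / ((Fintype.card G : ℝ) ^ (n + 1) * ((n + 1).factorial : ℝ))) *
          ∑ x : WP G (n + 1), Complex.normSq (Lop z c ψ x)
        = (1 / ((Fintype.card G : ℝ) ^ n * (n.factorial : ℝ))) *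
            ∑ y : WP G n, Complex.normSq (ψ y)) ∧
    (∀ (w₁ w₂ : WP G n) (ψ : WP G n → ℂ) (x : WP G (n + 1)),
      Lop z c ψ ((emb (Nat.le_succ n) w₂)⁻¹ * x * emb (Nat.le_succ n) w₁)
        = Lop z c (fun y => ψ (w₂⁻¹ * y * w₁)) x) := by
  classical
  have hGpos : (0 : ℝ) < (Fintype.card G : ℝ) := by
    exact_mod_cast Fintype.card_pos
  have hclosed : ∀ l : Fin k, ∀ g g' : G, IsConj g g' → g ∈ c l → g' ∈ c l := by
    intro l g g' hgg hg
    obtain ⟨g₀, hg₀⟩ := hconj l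
    rw [hg₀] at hg ⊢
    exact hg.trans hgg
  have hTpos : 0 < ewensT (fun l => Complex.normSq (z l)) c := by
    obtain ⟨l₀, hl₀, -⟩ := hpart 1
    rw [ewensT]
    apply Finset.sum_pos'
    · intro l _
      exact div_nonneg (mul_nonneg (Complex.normSq_nonneg _) (Nat.cast_nonneg _)) hGpos.le
    · refine ⟨l₀, Finset.mem_univ _, ?_⟩
      apply div_pos (mul_pos (Complex.normSq_pos.mpr (hz l₀)) ?_) hGpos
      have : Nonempty ↑(c l₀) := ⟨⟨1, hl₀⟩⟩
      exact_mod_cast Nat.card_pos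
  have hden : (0 : ℝ) < (n : ℝ) + ewensT (fun l => Complex.normSq (z l)) c :=
    add_pos_of_nonneg_of_pos (Nat.cast_nonneg n) hTpos
  have hr0 : (0 : ℝ) ≤ ((n : ℝ) + 1) / ((n : ℝ) + ewensT (fun l => Complex.normSq (z l)) c) :=
    div_nonneg (by positivity) hden.le
  have key : ∀ (ψ : WP G n → ℂ) (x : WP G (n + 1)), Complex.normSq (Lop z c ψ x)
      = ((n : ℝ) + 1) / ((n : ℝ) + ewensT (fun l => Complex.normSq (z l)) c)
        * (∏ l, if x.right (Fin.last n) = Fin.last n ∧ x.left (Fin.last n) ∈ c l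
            then Complex.normSq (z l) else 1)
        * Complex.normSq (ψ (proj x)) := by
    intro ψ x
    simp only [Lop]
    rw [map_mul Complex.normSq, map_mul Complex.normSq]
    have h1 : Complex.normSq ((Real.sqrt (((n : ℝ) + 1) /
        ((n : ℝ) + ewensT (fun l => Complex.normSq (z l)) c)) : ℝ) : ℂ)
        = ((n : ℝ) + 1) / ((n : ℝ) + ewensT (fun l => Complex.normSq (z l)) c) := by
      rw [Complex.normSq_ofReal, Real.mul_self_sqrt hr0]
    have h2 : Complex.normSq (∏ l, z l
          ^ ((WP.cycleCount x (c l) : ℤ) - (WP.cycleCount (proj x) (c l) : ℤ)))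
        = ∏ l, (if x.right (Fin.last n) = Fin.last n ∧ x.left (Fin.last n) ∈ c l
            then Complex.normSq (z l) else 1) := by
      rw [map_prod Complex.normSq]
      apply Finset.prod_congr rfl
      intro l _
      rw [cycleCount_proj x (c l) (hclosed l)]
      by_cases hcond : x.right (Fin.last n) = Fin.last n ∧ x.left (Fin.last n) ∈ c l
      · rw [if_pos hcond, if_pos hcond]
        push_cast
        rw [add_sub_cancel_left, zpow_one]
      · rw [if_neg hcond, if_neg hcond]
        push_cast
        rw [add_zero, sub_self, zpow_zero, map_one]
    rw [h1, h2]
  constructor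
  · intro ψ
    have hsum1 : ∑ x : WP G (n + 1), Complex.normSq (Lop z c ψ x)
        = ∑ p : WP G n × Fin (n + 1) × G, Complex.normSq (Lop z c ψ (insEquiv p)) :=
      (Equiv.sum_comp insEquiv fun x => Complex.normSq (Lop z c ψ x)).symm
    have hpoint : ∀ p : WP G n × Fin (n + 1) × G,
        Complex.normSq (Lop z c ψ (insEquiv p))
        = ((n : ℝ) + 1) / ((n : ℝ) + ewensT (fun l => Complex.normSq (z l)) c)
          * (∏ l, if p.2.1 = Fin.last n ∧ p.2.2 ∈ c l then Complex.normSq (z l) else 1)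
          * Complex.normSq (ψ p.1) := by
      rintro ⟨y, j, u⟩
      have hins : (insEquiv (y, j, u) : WP G (n + 1)) = ins y j u := rfl
      rw [hins, key ψ (ins y j u), ins_right_last, ins_left_last, proj_ins]
    have hS : (∑ q : Fin (n + 1) × G, ∏ l, (if q.1 = Fin.last n ∧ q.2 ∈ c l
          then Complex.normSq (z l) else 1))
        = (Fintype.card G : ℝ) * (ewensT (fun l => Complex.normSq (z l)) c + n) := by
      rw [Fintype.sum_prod_type, Fin.sum_univ_castSucc]
      have h1 : ∀ j : Fin n, (∑ u : G, ∏ l, (if j.castSucc = Fin.last n ∧ u ∈ c l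
          then Complex.normSq (z l) else 1)) = (Fintype.card G : ℝ) := by
        intro j
        rw [Finset.sum_congr rfl (fun u _ => Finset.prod_eq_one (fun l _ =>
          if_neg (fun h => (Fin.castSucc_lt_last j).ne h.1)))]
        simp
      rw [Finset.sum_congr rfl (fun j _ => h1 j)]
      have h2 : (∑ u : G, ∏ l, (if (Fin.last n : Fin (n + 1)) = Fin.last n ∧ u ∈ c l
          then Complex.normSq (z l) else 1))
          = (Fintype.card G : ℝ) * ewensT (fun l => Complex.normSq (z l)) c := by
        have hW : ∀ u : G, (∏ l, (if (Fin.last n : Fin (n + 1)) = Fin.last n ∧ u ∈ c l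
            then Complex.normSq (z l) else 1))
            = ∑ l, (if u ∈ c l then Complex.normSq (z l) else 0) := by
          intro u
          obtain ⟨l₀, hl₀, huniq⟩ := hpart u
          rw [Finset.prod_eq_single l₀ (fun l _ hne => if_neg (fun h => hne (huniq l h.2)))
              (fun h => absurd (Finset.mem_univ l₀) h),
            Finset.sum_eq_single l₀ (fun l _ hne => if_neg (fun h => hne (huniq l h)))
              (fun h => absurd (Finset.mem_univ l₀) h),
            if_pos ⟨rfl, hl₀⟩, if_pos hl₀]
        rw [Finset.sum_congr rfl (fun u _ => hW u), Finset.sum_comm]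
        have h3 : ∀ l, (∑ u : G, if u ∈ c l then Complex.normSq (z l) else 0)
            = (Nat.card (c l) : ℝ) * Complex.normSq (z l) := by
          intro l
          rw [← Finset.sum_filter, Finset.sum_const, nsmul_eq_mul]
          congr 2
          rw [Nat.card_eq_fintype_card, Fintype.card_subtype]
        rw [Finset.sum_congr rfl (fun l _ => h3 l), ewensT, Finset.mul_sum]
        apply Finset.sum_congr rfl
        intro l _
        field_simp
      rw [h2, Finset.sum_const, Finset.card_univ, Fintype.card_fin, nsmul_eq_mul]
      ring
    rw [hsum1, Finset.sum_congr rfl (fun p _ => hpoint p), Fintype.sum_prod_type]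
    have hinner : ∀ y : WP G n,
        (∑ q : Fin (n + 1) × G,
          ((n : ℝ) + 1) / ((n : ℝ) + ewensT (fun l => Complex.normSq (z l)) c)
          * (∏ l, if q.1 = Fin.last n ∧ q.2 ∈ c l then Complex.normSq (z l) else 1)
          * Complex.normSq (ψ y))
        = ((n : ℝ) + 1) / ((n : ℝ) + ewensT (fun l => Complex.normSq (z l)) c)
          * ((Fintype.card G : ℝ) * (ewensT (fun l => Complex.normSq (z l)) c + n))
          * Complex.normSq (ψ y) := by
      intro y
      rw [← Finset.sum_mul, ← Finset.mul_sum, hS]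
    rw [Finset.sum_congr rfl (fun y _ => hinner y), ← Finset.mul_sum]
    rw [← mul_assoc]
    congr 1
    have hfactne : ((n.factorial : ℝ)) ≠ 0 := by
      exact_mod_cast n.factorial_ne_zero
    have hfact : (((n + 1).factorial : ℕ) : ℝ) = ((n : ℝ) + 1) * (n.factorial : ℝ) := by
      rw [Nat.factorial_succ]
      push_cast
      ring
    rw [hfact]
    field_simp
    ring
  · intro w₁ w₂ ψ x
    have hx' : (emb (Nat.le_succ n) w₂)⁻¹ * x * emb (Nat.le_succ n) w₁
        = emb (Nat.le_succ n) w₂⁻¹ * x * emb (Nat.le_succ n) w₁ := by rw [emb_inv]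
    rw [hx']
    have hproj : proj (emb (Nat.le_succ n) w₂⁻¹ * x * emb (Nat.le_succ n) w₁)
        = w₂⁻¹ * proj x * w₁ := by
      rw [proj_mul_right, proj_mul_left]
    simp only [Lop]
    congr 1
    · congr 1
      apply Finset.prod_congr rfl
      intro l _
      rw [cycleCount_proj _ (c l) (hclosed l), cycleCount_proj x (c l) (hclosed l)]
      by_cases hfix : x.right (Fin.last n) = Fin.last n
      · have hleft : (emb (Nat.le_succ n) w₂⁻¹ * x * emb (Nat.le_succ n) w₁).left (Fin.last n)
            = x.left (Fin.last n) := mul3_left_last w₂⁻¹ w₁ x hfix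
        have hiff := and_congr (mul3_fix_iff w₂⁻¹ w₁ x) (by rw [hleft] :
          ((emb (Nat.le_succ n) w₂⁻¹ * x * emb (Nat.le_succ n) w₁).left (Fin.last n) ∈ c l)
            ↔ (x.left (Fin.last n) ∈ c l))
        rw [if_congr hiff rfl rfl]
        congr 1
        push_cast
        ring
      · rw [if_neg (fun h => hfix ((mul3_fix_iff w₂⁻¹ w₁ x).mp h.1)),
          if_neg (fun h => hfix h.1)]
        congr 1
        push_cast
        ring
    · show ψ (proj (emb (Nat.le_succ n) w₂⁻¹ * x * emb (Nat.le_succ n) w₁))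
        = ψ (w₂⁻¹ * proj x * w₁)
      rw [hproj]

end WreathPaper
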